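/- Let x_k → x₀ in ℝ^N, let p : ℝ^N → ℝ be continuous with p(x₀) > 2, let φ be a C² function, and suppose ∇φ(x₀) ≠ 0 and, for all large k, −(|∇φ(x_k)|^{k−2} Δφ(x_k) + (k−2)|∇φ(x_k)|^{k−4} Δ_∞ φ(x_k)) ≥ 0, where Δ_∞ φ = ⟨D²φ ∇φ, ∇φ⟩ is the infinity Laplacian. Then −Δ_∞ φ(x₀) ≥ 0. -/

import Mathlib

/-! Since `∇φ(x_k) ≠ 0` for large `k`, dividing the `k`-Laplacian inequality by
`(k - 2) |∇φ(x_k)|^(k-4)` gives `Δ∞φ(x_k) ≤ -|∇φ(x_k)|² Δφ(x_k) / (k - 2)`. For `φ ∈ C²` both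
Laplacians are continuous, so the right side tends to `0` and the left side to `Δ∞φ(x₀)`. -/

open Filter

noncomputable section

/-- The second derivative bilinear form `D²φ(x)(u,v)`. -/
def secondDeriv {N : ℕ} (φ : EuclideanSpace ℝ (Fin N) → ℝ)
    (x u v : EuclideanSpace ℝ (Fin N)) : ℝ :=
  fderiv ℝ (fun y => fderiv ℝ φ y v) x u

/-- The Laplacian `Δφ(x) = ∑ᵢ ∂²φ/∂xᵢ²`. -/
def lap {N : ℕ} (φ : EuclideanSpace ℝ (Fin N) → ℝ) (x : EuclideanSpace ℝ (Fin N)) : ℝ :=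
  ∑ i : Fin N, secondDeriv φ x (EuclideanSpace.basisFun (Fin N) ℝ i)
    (EuclideanSpace.basisFun (Fin N) ℝ i)

/-- The infinity Laplacian `Δ∞φ(x) = ⟨D²φ(x) ∇φ(x), ∇φ(x)⟩`. -/
def infLap {N : ℕ} (φ : EuclideanSpace ℝ (Fin N) → ℝ) (x : EuclideanSpace ℝ (Fin N)) : ℝ :=
  secondDeriv φ x (gradient φ x) (gradient φ x)

open Topology

theorem ContDiff.continuous_gradient {F : Type*} [NormedAddCommGroup F] [InnerProductSpace ℝ F]
    [CompleteSpace F] {f : F → ℝ} (hf : ContDiff ℝ 1 f) : Continuous (gradient f) :=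
  (InnerProductSpace.toDual ℝ F).symm.continuous.comp (hf.continuous_fderiv one_ne_zero)

section SecondDerivatives

variable {N : ℕ} {φ : EuclideanSpace ℝ (Fin N) → ℝ}

theorem secondDeriv_eq_fderiv_fderiv {x : EuclideanSpace ℝ (Fin N)}
    (hφ : DifferentiableAt ℝ (fderiv ℝ φ) x) (u v : EuclideanSpace ℝ (Fin N)) :
    secondDeriv φ x u v = fderiv ℝ (fderiv ℝ φ) x u v := by
  rw [secondDeriv, fderiv_clm_apply hφ (differentiableAt_const v)]
  simp

theorem ContDiff.continuous_secondDeriv (hφ : ContDiff ℝ 2 φ)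
    {u v : EuclideanSpace ℝ (Fin N) → EuclideanSpace ℝ (Fin N)}
    (hu : Continuous u) (hv : Continuous v) :
    Continuous fun x => secondDeriv φ x (u x) (v x) := by
  have hφ' : ContDiff ℝ 1 (fderiv ℝ φ) := hφ.fderiv_right le_rfl
  simp_rw [secondDeriv_eq_fderiv_fderiv (hφ'.differentiable one_ne_zero _)]
  exact ((hφ'.continuous_fderiv one_ne_zero).clm_apply hu).clm_apply hv

theorem ContDiff.continuous_lap (hφ : ContDiff ℝ 2 φ) : Continuous (lap φ) :=
  continuous_finsetSum _ fun _ _ => hφ.continuous_secondDeriv continuous_const continuous_const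

theorem ContDiff.continuous_infLap (hφ : ContDiff ℝ 2 φ) : Continuous (infLap φ) :=
  have hg := (hφ.of_le one_le_two).continuous_gradient
  hφ.continuous_secondDeriv hg hg

end SecondDerivatives

theorem le_neg_sq_mul_div_of_rpow_ineq {r t A I : ℝ} (hr : 0 < r) (ht : 2 < t)
    (h : 0 ≤ -(r ^ (t - 2) * A + (t - 2) * r ^ (t - 4) * I)) :
    I ≤ -(r ^ 2 * A) / (t - 2) := by
  have hsplit : r ^ (t - 2) = r ^ (t - 4) * r ^ 2 := by
    rw [show t - 2 = t - 4 + (2 : ℕ) by push_cast; ring, Real.rpow_add hr, Real.rpow_natCast]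
  have hpow : 0 < r ^ (t - 4) := Real.rpow_pos_of_pos hr _
  rw [hsplit] at h
  rw [le_div_iff₀ (by linarith)]
  nlinarith

theorem tendsto_div_natCast_sub_two_nhds_zero {a : ℕ → ℝ} {L : ℝ} (ha : Tendsto a atTop (𝓝 L)) :
    Tendsto (fun k : ℕ => a k / ((k : ℝ) - 2)) atTop (𝓝 0) :=
  ha.div_atTop (tendsto_atTop_add_const_right _ _ tendsto_natCast_atTop_atTop)

theorem stmt_10_general {N : ℕ} (x : ℕ → EuclideanSpace ℝ (Fin N)) (x₀ : EuclideanSpace ℝ (Fin N))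
    (hx : Tendsto x atTop (nhds x₀))
    (φ : EuclideanSpace ℝ (Fin N) → ℝ) (hφ : ContDiff ℝ 2 φ)
    (hgrad : gradient φ x₀ ≠ 0)
    (hineq : ∀ᶠ k : ℕ in atTop,
      0 ≤ -(‖gradient φ (x k)‖ ^ ((k : ℝ) - 2) * lap φ (x k) +
        ((k : ℝ) - 2) * ‖gradient φ (x k)‖ ^ ((k : ℝ) - 4) * infLap φ (x k))) :
    0 ≤ -infLap φ x₀ := by
  have hgrad_lim : Tendsto (fun k => ‖gradient φ (x k)‖) atTop (𝓝 ‖gradient φ x₀‖) :=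
    ((hφ.of_le one_le_two).continuous_gradient.norm.tendsto x₀).comp hx
  have hgrad_pos : ∀ᶠ k in atTop, 0 < ‖gradient φ (x k)‖ :=
    hgrad_lim.eventually (eventually_gt_nhds (norm_pos_iff.mpr hgrad))
  have hbound : ∀ᶠ k : ℕ in atTop,
      infLap φ (x k) ≤ -(‖gradient φ (x k)‖ ^ 2 * lap φ (x k)) / ((k : ℝ) - 2) := by
    filter_upwards [hineq, hgrad_pos, eventually_gt_atTop 2] with k hk hr hk2
    exact le_neg_sq_mul_div_of_rpow_ineq hr (by exact_mod_cast hk2) hk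
  have hbound_lim := tendsto_div_natCast_sub_two_nhds_zero
    ((hgrad_lim.pow 2).mul ((hφ.continuous_lap.tendsto x₀).comp hx)).neg
  exact neg_nonneg.mpr
    (le_of_tendsto_of_tendsto ((hφ.continuous_infLap.tendsto x₀).comp hx) hbound_lim hbound)

/-- Passing to the limit in the `k`-Laplacian viscosity inequality yields
`−Δ_∞ φ(x₀) ≥ 0`. -/
theorem stmt_10 {N : ℕ} (x : ℕ → EuclideanSpace ℝ (Fin N)) (x₀ : EuclideanSpace ℝ (Fin N))
    (hx : Tendsto x atTop (nhds x₀))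
    (p : EuclideanSpace ℝ (Fin N) → ℝ) (hp : Continuous p) (hp2 : 2 < p x₀)
    (φ : EuclideanSpace ℝ (Fin N) → ℝ) (hφ : ContDiff ℝ 2 φ)
    (hgrad : gradient φ x₀ ≠ 0)
    (hineq : ∀ᶠ k : ℕ in atTop,
      0 ≤ -(‖gradient φ (x k)‖ ^ ((k : ℝ) - 2) * lap φ (x k) +
        ((k : ℝ) - 2) * ‖gradient φ (x k)‖ ^ ((k : ℝ) - 4) * infLap φ (x k))) :
    0 ≤ -infLap φ x₀ :=
  stmt_10_general x x₀ hx φ hφ hgrad hineq
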